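/- A braiding on the split real Tambara-Yamagami category 𝒞_ℝ(K₄ⁿ, h^n, τ) exists if and only if either n > 0, or n = 0 and τ > 0. In terms of solution data: the set of solutions to the reduced hexagon equations is in bijection with pairs (σ, ε) where σ: K₄ⁿ → {±1} is a quadratic form with δσ = h^n and sign sgn(Σσ) = sgn(τ), and ε ∈ {±1}. -/

import Mathlib

/-- The Klein four-group. -/
abbrev K4 : Type := ZMod 2 × ZMod 2

/-- The standard hyperbolic pairing on `K₄`. -/
noncomputable def hq (a b : K4) : ℝˣ :=
  (-1 : ℝˣ) ^ (a.1 * b.2 + a.2 * b.1 : ZMod 2).val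

/-- The `n`-fold orthogonal sum `h^n` of the standard hyperbolic pairing. -/
noncomputable def hpow (n : ℕ) (a b : Fin n → K4) : ℝˣ := ∏ i, hq (a i) (b i)

/-- The reduced hexagon equations for a braiding on the split real
Tambara–Yamagami category `𝒞_ℝ(K₄ⁿ, h^n, τ)`, for data `(σ₀, σ₁, σ₂, σ₃)`. -/
def ReducedSplit (n : ℕ) (τ : ℝ)
    (s : ((Fin n → K4) → (Fin n → K4) → ℝˣ) × ((Fin n → K4) → ℝˣ) ×
      ((Fin n → K4) → ℝˣ) × ((Fin n → K4) → ℝˣ)) : Prop :=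
  (∀ a b, s.1 a b = hpow n a b) ∧
  (∀ a, s.2.1 a ^ 2 = hpow n a a) ∧
  (∀ a b, s.2.1 (a + b) = s.2.1 a * s.2.1 b * hpow n a b) ∧
  (∀ a, s.2.2.1 a = s.2.1 a) ∧
  ((s.2.2.2 0 : ℝ) ^ 2 = τ * ∑ c : Fin n → K4, (s.2.1 c : ℝ)) ∧
  (∀ a, s.2.2.2 a = s.2.2.2 0 * s.2.1 a)

/-!
A solution of the reduced hexagon equations is determined by `σ := σ₁`, which must be a quadratic
refinement of `h^n`, and by `σ₃(0)`, a square root of `τ · Σ σ`. Such a root exists exactly when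
`τ · Σ σ > 0`, and it is then `ε √(τ · Σ σ)` for a unique sign `ε`.

Existence thus reduces to the signs of the Gauss sums `Σ σ`. On `K₄` the functions
`q_t(x) = (-1)^(x₁x₂ + x₁t₂ + x₂t₁)` refine `h`, with Gauss sum `2` for `t = 0` and `-2` for
`t = (1,1)`, and coordinatewise products of them refine `h^n`, with the product of the Gauss sums
as Gauss sum. For `n = 0` the only refinement is `σ = 1`, whose Gauss sum is `1`, so `τ > 0` is
forced.
-/

open Finset

/-- The paper's condition `δσ = β`. -/
def IsQuadraticRefinement {G M : Type*} [Add G] [Mul M] (β : G → G → M) (σ : G → M) : Prop :=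
  ∀ a b, σ (a + b) = σ a * σ b * β a b

namespace IsQuadraticRefinement

variable {G M : Type*} {β : G → G → M} {σ : G → M}

theorem map_zero [AddZeroClass G] [Group M] (h : IsQuadraticRefinement β σ) (hβ : β 0 0 = 1) :
    σ 0 = 1 := by
  have h00 := h 0 0
  rw [add_zero, hβ, mul_one] at h00
  exact mul_eq_left.mp h00.symm

theorem mul_self [AddZeroClass G] [Group M] (h : IsQuadraticRefinement β σ)
    (hβ : ∀ a, β a a = 1) (hG : ∀ a : G, a + a = 0) (a : G) : σ a * σ a = 1 := by
  have haa := h a a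
  rwa [hG, hβ, mul_one, h.map_zero (hβ 0), eq_comm] at haa

theorem pi {ι : Type*} [Fintype ι] {G : ι → Type*} [∀ i, Add (G i)] [CommMonoid M]
    {β : ∀ i, G i → G i → M} {σ : ∀ i, G i → M} (h : ∀ i, IsQuadraticRefinement (β i) (σ i)) :
    IsQuadraticRefinement (fun a b => ∏ i, β i (a i) (b i)) (fun a : ∀ i, G i => ∏ i, σ i (a i)) :=
  fun a b => by simp only [Pi.add_apply, h _ (a _), ← prod_mul_distrib]

end IsQuadraticRefinement

noncomputable def signZMod2 (x : ZMod 2) : ℝˣ := (-1) ^ x.val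

theorem signZMod2_zero : signZMod2 0 = 1 := rfl

theorem signZMod2_one : signZMod2 1 = -1 := pow_one _

theorem signZMod2_add (x y : ZMod 2) : signZMod2 (x + y) = signZMod2 x * signZMod2 y := by
  rw [signZMod2, signZMod2, signZMod2, ZMod.val_add, ← pow_add,
    ← pow_eq_pow_mod _ (by norm_num)]

theorem sum_ZMod2 {M : Type*} [AddCommMonoid M] (f : ZMod 2 → M) : ∑ x, f x = f 0 + f 1 :=
  Fin.sum_univ_two f

theorem sum_K4 {M : Type*} [AddCommMonoid M] (f : K4 → M) :
    ∑ x, f x = f (0, 0) + f (0, 1) + f (1, 0) + f (1, 1) := by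
  rw [Fintype.sum_prod_type, sum_ZMod2, sum_ZMod2, sum_ZMod2, ← add_assoc]

theorem hq_eq_signZMod2 (a b : K4) : hq a b = signZMod2 (a.1 * b.2 + a.2 * b.1) := rfl

theorem hq_self (a : K4) : hq a a = 1 := by
  rw [hq_eq_signZMod2, mul_comm a.2, CharTwo.add_self_eq_zero, signZMod2_zero]

theorem hpow_self (n : ℕ) (a : Fin n → K4) : hpow n a a = 1 := by
  simp only [hpow, hq_self, prod_const_one]

theorem add_self_eq_zero_K4pow {n : ℕ} (a : Fin n → K4) : a + a = 0 :=
  funext fun i => CharTwo.add_self_eq_zero (a i)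

noncomputable def qK4 (t x : K4) : ℝˣ := signZMod2 (x.1 * x.2 + x.1 * t.2 + x.2 * t.1)

theorem isQuadraticRefinement_qK4 (t : K4) : IsQuadraticRefinement hq (qK4 t) := by
  intro x y
  simp only [qK4, hq_eq_signZMod2, ← signZMod2_add, Prod.fst_add, Prod.snd_add]
  congr 1
  ring

theorem sum_qK4_zero : ∑ x, (qK4 0 x : ℝ) = 2 := by
  rw [sum_K4]
  simp only [qK4, Prod.fst_zero, Prod.snd_zero, mul_zero, mul_one, add_zero, signZMod2_zero,
    signZMod2_one]
  norm_num

theorem sum_qK4_one_one : ∑ x, (qK4 (1, 1) x : ℝ) = -2 := by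
  rw [sum_K4]
  simp only [qK4, mul_zero, mul_one, add_zero, zero_add, show (1 + 1 + 1 : ZMod 2) = 1 from rfl,
    signZMod2_zero, signZMod2_one]
  norm_num

noncomputable def qK4pow {n : ℕ} (T : Fin n → K4) (a : Fin n → K4) : ℝˣ := ∏ i, qK4 (T i) (a i)

theorem isQuadraticRefinement_qK4pow {n : ℕ} (T : Fin n → K4) :
    IsQuadraticRefinement (hpow n) (qK4pow T) :=
  IsQuadraticRefinement.pi fun i => isQuadraticRefinement_qK4 (T i)

theorem sum_qK4pow {n : ℕ} (T : Fin n → K4) :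
    ∑ a, (qK4pow T a : ℝ) = ∏ i, ∑ x, (qK4 (T i) x : ℝ) := by
  simp only [qK4pow, Units.coe_prod, Fintype.prod_sum]

theorem sum_qK4pow_zero (n : ℕ) : ∑ a, (qK4pow (0 : Fin n → K4) a : ℝ) = 2 ^ n := by
  simp only [sum_qK4pow, Pi.zero_apply, sum_qK4_zero, prod_const, card_univ, Fintype.card_fin]

theorem sum_qK4pow_cons_one_one (m : ℕ) :
    ∑ a, (qK4pow (Fin.cons (1, 1) 0 : Fin (m + 1) → K4) a : ℝ) = -2 ^ (m + 1) := by
  rw [sum_qK4pow, Fin.prod_univ_succ]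
  simp only [Fin.cons_zero, Fin.cons_succ, Pi.zero_apply, sum_qK4_one_one, sum_qK4_zero,
    prod_const, card_univ, Fintype.card_fin]
  ring

theorem exists_isQuadraticRefinement_hpow_mul_sum_pos {n : ℕ} {τ : ℝ} (hτ : τ ≠ 0)
    (h : 0 < n ∨ 0 < τ) :
    ∃ σ, IsQuadraticRefinement (hpow n) σ ∧ 0 < τ * ∑ a, (σ a : ℝ) := by
  rcases hτ.lt_or_gt with hneg | hpos
  · obtain ⟨m, rfl⟩ : ∃ m, n = m + 1 :=
      Nat.exists_eq_add_one.mpr (h.resolve_right hneg.not_gt)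
    refine ⟨_, isQuadraticRefinement_qK4pow (Fin.cons (1, 1) 0), ?_⟩
    rw [sum_qK4pow_cons_one_one]
    exact mul_pos_of_neg_of_neg hneg (neg_neg_of_pos (by positivity))
  · refine ⟨_, isQuadraticRefinement_qK4pow 0, ?_⟩
    rw [sum_qK4pow_zero]
    positivity

theorem IsQuadraticRefinement.sum_eq_one_of_fin_zero {σ : (Fin 0 → K4) → ℝˣ}
    (h : IsQuadraticRefinement (hpow 0) σ) : ∑ a, (σ a : ℝ) = 1 := by
  rw [Fintype.sum_subsingleton _ 0, h.map_zero (hpow_self 0 0), Units.val_one]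

noncomputable def sqrtUnit {S : ℝ} (hS : 0 < S) : ℝˣ := Units.mk0 √S (Real.sqrt_pos.mpr hS).ne'

theorem sqrtUnit_sq {S : ℝ} (hS : 0 < S) : ((sqrtUnit hS : ℝˣ) : ℝ) ^ 2 = S :=
  Real.sq_sqrt hS.le

theorem mul_sqrtUnit_inv_eq_one_or_neg_one {S : ℝ} (hS : 0 < S) {c : ℝˣ} (hc : (c : ℝ) ^ 2 = S) :
    c * (sqrtUnit hS)⁻¹ = 1 ∨ c * (sqrtUnit hS)⁻¹ = -1 := by
  have hsq : c ^ 2 = sqrtUnit hS ^ 2 := Units.ext <| by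
    rw [Units.val_pow_eq_pow_val, Units.val_pow_eq_pow_val, hc, sqrtUnit_sq]
  rcases Units.eq_or_eq_neg_of_sq_eq_sq _ _ hsq with rfl | rfl
  · exact Or.inl (mul_inv_cancel _)
  · exact Or.inr (by rw [neg_mul, mul_inv_cancel])

/-- The data `(σ₀, σ₁, σ₂, σ₃)` of a braiding on `𝒞_ℝ(K₄ⁿ, h^n, τ)`. -/
abbrev HexagonData (n : ℕ) : Type :=
  ((Fin n → K4) → (Fin n → K4) → ℝˣ) × ((Fin n → K4) → ℝˣ) ×
    ((Fin n → K4) → ℝˣ) × ((Fin n → K4) → ℝˣ)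

namespace ReducedSplit

variable {n : ℕ} {τ : ℝ} {s : HexagonData n}

theorem isQuadraticRefinement (hs : ReducedSplit n τ s) :
    IsQuadraticRefinement (hpow n) s.2.1 :=
  hs.2.2.1

theorem mul_sum_pos (hs : ReducedSplit n τ s) : 0 < τ * ∑ c, (s.2.1 c : ℝ) :=
  hs.2.2.2.2.1 ▸ sq_pos_iff.mpr (Units.ne_zero _)

theorem of_isQuadraticRefinement {σ : (Fin n → K4) → ℝˣ} {ε : ℝˣ}
    (hσ : IsQuadraticRefinement (hpow n) σ) (hpos : 0 < τ * ∑ c, (σ c : ℝ))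
    (hε : ε = 1 ∨ ε = -1) :
    ReducedSplit n τ (hpow n, σ, σ, fun a => ε * sqrtUnit hpos * σ a) := by
  have hσ0 : σ 0 = 1 := hσ.map_zero (hpow_self n 0)
  refine ⟨fun _ _ => rfl, fun a => ?_, hσ, fun _ => rfl, ?_, fun a => ?_⟩
  · rw [sq, hσ.mul_self (hpow_self n) add_self_eq_zero_K4pow, hpow_self]
  · have hε2 : (ε : ℝ) ^ 2 = 1 := by rcases hε with rfl | rfl <;> norm_num
    simp only [hσ0, mul_one, Units.val_mul, mul_pow, hε2, one_mul, sqrtUnit_sq]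
  · simp only [hσ0, mul_one]

end ReducedSplit

noncomputable def reducedSplitEquiv (n : ℕ) (τ : ℝ) :
    {s : HexagonData n // ReducedSplit n τ s} ≃
      {p : ((Fin n → K4) → ℝˣ) × ℝˣ // IsQuadraticRefinement (hpow n) p.1 ∧
        0 < τ * ∑ c, (p.1 c : ℝ) ∧ (p.2 = 1 ∨ p.2 = -1)} where
  toFun s := ⟨(s.1.2.1, s.1.2.2.2 0 * (sqrtUnit s.2.mul_sum_pos)⁻¹),
    s.2.isQuadraticRefinement, s.2.mul_sum_pos,
    mul_sqrtUnit_inv_eq_one_or_neg_one _ s.2.2.2.2.2.1⟩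
  invFun p := ⟨_, ReducedSplit.of_isQuadraticRefinement p.2.1 p.2.2.1 p.2.2.2⟩
  left_inv := by
    rintro ⟨⟨s₀, σ, s₂, s₃⟩, hs⟩
    obtain ⟨hs₀, -, -, hs₂, -, hs₃⟩ := hs
    ext1
    simp only [inv_mul_cancel_right, ← hs₃]
    exact Prod.ext (funext₂ fun a b => (hs₀ a b).symm)
      (Prod.ext rfl (Prod.ext (funext fun a => (hs₂ a).symm) rfl))
  right_inv := by
    rintro ⟨⟨σ, ε⟩, hσ, -, -⟩
    ext1
    dsimp only at hσ ⊢
    rw [hσ.map_zero (hpow_self n 0), mul_one, mul_inv_cancel_right]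

/-- Braidings on `𝒞_ℝ(K₄ⁿ, h^n, τ)` (i.e. solutions of the reduced hexagon
equations) exist iff `n > 0` or (`n = 0` and `τ > 0`); moreover the set of
solutions is in bijection with pairs `(σ, ε)` of an `h^n`-admissible quadratic
form `σ` with `sgn(Σσ) = sgn(τ)` and a sign `ε`. -/
theorem stmt15 (n : ℕ) (τ : ℝ)
    (hτ : τ = ((2 : ℝ) ^ n)⁻¹ ∨ τ = -((2 : ℝ) ^ n)⁻¹) :
    (Nonempty {s : ((Fin n → K4) → (Fin n → K4) → ℝˣ) × ((Fin n → K4) → ℝˣ) ×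
        ((Fin n → K4) → ℝˣ) × ((Fin n → K4) → ℝˣ) // ReducedSplit n τ s} ↔
      (0 < n ∨ 0 < τ)) ∧
    Nonempty
      ({s : ((Fin n → K4) → (Fin n → K4) → ℝˣ) × ((Fin n → K4) → ℝˣ) ×
          ((Fin n → K4) → ℝˣ) × ((Fin n → K4) → ℝˣ) // ReducedSplit n τ s} ≃
        {p : ((Fin n → K4) → ℝˣ) × ℝˣ //
          (∀ a b, p.1 (a + b) = p.1 a * p.1 b * hpow n a b) ∧
          (0 < τ * ∑ c : Fin n → K4, (p.1 c : ℝ)) ∧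
          (p.2 = 1 ∨ p.2 = -1)}) := by
  have hτ0 : τ ≠ 0 := by rcases hτ with rfl | rfl <;> simp
  refine ⟨⟨fun ⟨s⟩ => ?_, fun h => ?_⟩, ⟨reducedSplitEquiv n τ⟩⟩
  · rcases Nat.eq_zero_or_pos n with rfl | hn
    · have hpos := s.2.mul_sum_pos
      rw [s.2.isQuadraticRefinement.sum_eq_one_of_fin_zero, mul_one] at hpos
      exact Or.inr hpos
    · exact Or.inl hn
  · obtain ⟨σ, hσ, hpos⟩ := exists_isQuadraticRefinement_hpow_mul_sum_pos hτ0 h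
    exact ⟨(reducedSplitEquiv n τ).symm ⟨(σ, 1), hσ, hpos, Or.inl rfl⟩⟩
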